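/- For all positive integers n and b ≥ 2, the flattening of ((b+1)·n) ⊖_b n equals n ⊕_{-b} (-n). Here ⊖_b is digitwise subtraction mod b in base b, ⊕_{-b} is digitwise addition mod b of base-(-b) digits read as a base-b number, and flattening replaces each nonzero base-b digit by 1. -/

import Mathlib

/-- The `i`-th digit of the base-`b` expansion of `n`. -/
def bDigit (b n i : ℕ) : ℕ := (Nat.digits b n).getD i 0

/-- One step of the base-`(-b)` digit extraction: remove the least digit and divide by `-b`. -/
def negaStep (b m : ℤ) : ℤ := (m - m % b) / (-b)

/-- The `i`-th digit of the base-`(-b)` expansion of the integer `m`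
(digits lie in `{0,...,b-1}` when `b ≥ 2`). -/
def negaDigit (b m : ℤ) (i : ℕ) : ℤ := ((negaStep b)^[i] m) % b

/-- Digitwise addition mod `b` of base-`(-b)` expansions, read off in powers of `+b`. -/
noncomputable def oplusNeg (b α β : ℤ) : ℤ :=
  ∑ᶠ i : ℕ, ((negaDigit b α i + negaDigit b β i) % b) * b ^ i

/-- Digitwise addition mod `b` of base-`b` expansions. -/
noncomputable def oplus (b α β : ℕ) : ℕ :=
  ∑ᶠ i : ℕ, ((bDigit b α i + bDigit b β i) % b) * b ^ i

/-- Digitwise subtraction mod `b` of base-`b` expansions. -/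
noncomputable def ominus (b α β : ℕ) : ℕ :=
  ∑ᶠ i : ℕ, ((((bDigit b α i : ℤ) - (bDigit b β i : ℤ)) % (b : ℤ)).toNat) * b ^ i

/-- Flattening: replace each nonzero base-`b` digit by `1`. -/
noncomputable def flat (b n : ℕ) : ℕ :=
  ∑ᶠ i : ℕ, min (bDigit b n i) 1 * b ^ i

/-- The carry sequence for multiplying `n` by `b+1` in base `b`. -/
def carrySeq (b n : ℕ) : ℕ → ℕ
  | 0 => 0
  | k + 1 => (bDigit b n k + carrySeq b n k) / b + bDigit b n k

/-!
Put `f_i = n / b ^ i` and `c_i = carrySeq b n i ∈ [0, b]`, the carry into position `i` when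
`(b + 1) n = n + b n` is computed in base `b`. Then `(b + 1) n / b ^ i = (b + 1) f_i + c_i`, so the
`i`-th base-`b` digit of `((b + 1) n) ⊖_b n` is `c_i mod b`, and its flattening has digit `1`
exactly when `0 < c_i < b`.

On the other side, the `i`-th tails `negaStep^[i]` of `n` and `-n` are, in one order or the other,
`f_i + min c_i 1` and `-(f_i + c_i / b)`: one application of `negaStep` carries this pair to the
pair at `i + 1` with the order swapped. So the `i`-th base-`(-b)` digit sum of `n` and `-n` is
`min c_i 1 - c_i / b`, which again is `1` exactly when `0 < c_i < b` and `0` otherwise.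
-/

open Finset Function

lemma bDigit_eq_div_pow_mod {b : ℕ} (hb : 2 ≤ b) (n i : ℕ) : bDigit b n i = n / b ^ i % b :=
  Nat.getD_digits n i hb

lemma bDigit_lt {b : ℕ} (hb : 2 ≤ b) (n i : ℕ) : bDigit b n i < b := by
  rw [bDigit_eq_div_pow_mod hb]
  exact Nat.mod_lt _ (by omega)

lemma div_pow_eq_mul_div_pow_succ_add_bDigit {b : ℕ} (hb : 2 ≤ b) (n i : ℕ) :
    n / b ^ i = b * (n / b ^ (i + 1)) + bDigit b n i := by
  rw [bDigit_eq_div_pow_mod hb, pow_succ, ← Nat.div_div_eq_div_mul]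
  exact (Nat.div_add_mod _ b).symm

lemma sum_range_mul_pow_div_pow_mod {b : ℕ} (hb : 0 < b) {d : ℕ → ℕ} (hd : ∀ i, d i < b)
    {N : ℕ} (hN : ∀ i, N ≤ i → d i = 0) (j : ℕ) :
    (∑ i ∈ range N, d i * b ^ i) / b ^ j % b = d j := by
  induction N generalizing d j with
  | zero => simp [hN j (Nat.zero_le j)]
  | succ N ih =>
    have hsplit : ∑ i ∈ range (N + 1), d i * b ^ i
        = d 0 + b * ∑ i ∈ range N, d (i + 1) * b ^ i := by
      rw [sum_range_succ', mul_sum, add_comm]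
      simp only [pow_succ, pow_zero, mul_one]
      congr 1
      exact sum_congr rfl fun i _ => by ring
    rw [hsplit]
    cases j with
    | zero => simp [Nat.mod_eq_of_lt (hd 0)]
    | succ j =>
      rw [pow_succ', ← Nat.div_div_eq_div_mul, Nat.add_mul_div_left _ _ hb,
        Nat.div_eq_of_lt (hd 0), zero_add]
      exact ih (fun i => hd (i + 1)) (fun i hi => hN (i + 1) (by omega)) j

lemma bDigit_finsum {b : ℕ} (hb : 2 ≤ b) {d : ℕ → ℕ} (hd : ∀ i, d i < b)
    (hfin : (support d).Finite) (j : ℕ) :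
    bDigit b (∑ᶠ i, d i * b ^ i) j = d j := by
  obtain ⟨M, hM⟩ := hfin.bddAbove
  have hN : ∀ i, M + 1 ≤ i → d i = 0 := fun i hi =>
    notMem_support.mp fun h => by have := hM h; omega
  rw [finsum_eq_sum_of_support_subset _ (s := range (M + 1)), bDigit_eq_div_pow_mod hb,
    sum_range_mul_pow_div_pow_mod (by omega) hd hN]
  intro i hi
  rw [coe_range, Set.mem_Iio]
  by_contra h
  exact hi (by simp [hN i (by omega)])

lemma div_eq_ite_of_lt_two_mul {x b : ℕ} (h : x < 2 * b) :
    x / b = if b ≤ x then 1 else 0 := by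
  split_ifs with hbx
  · rw [Nat.div_eq_sub_div (by omega) hbx, Nat.div_eq_of_lt (by omega)]
  · exact Nat.div_eq_of_lt (by omega)

lemma carrySeq_le {b : ℕ} (hb : 2 ≤ b) (n i : ℕ) : carrySeq b n i ≤ b := by
  induction i with
  | zero => exact Nat.zero_le b
  | succ i ih =>
    have ha := bDigit_lt hb n i
    rw [carrySeq, div_eq_ite_of_lt_two_mul (by omega)]
    split_ifs <;> omega

lemma mul_succ_div_pow {b : ℕ} (hb : 2 ≤ b) (n i : ℕ) :
    (b + 1) * n / b ^ i = (b + 1) * (n / b ^ i) + carrySeq b n i := by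
  induction i with
  | zero => simp [carrySeq]
  | succ i ih =>
    rw [pow_succ, ← Nat.div_div_eq_div_mul, ih, carrySeq,
      div_pow_eq_mul_div_pow_succ_add_bDigit hb n i, ← pow_succ]
    generalize n / b ^ (i + 1) = q
    rw [show (b + 1) * (b * q + bDigit b n i) + carrySeq b n i
        = bDigit b n i + carrySeq b n i + b * ((b + 1) * q + bDigit b n i) by ring,
      Nat.add_mul_div_left _ _ (by omega)]
    ring

lemma carrySeq_eq_zero_of_lt {b n i : ℕ} (hb : 2 ≤ b) (hi : (b + 1) * n < b ^ i) :
    carrySeq b n i = 0 := by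
  have h := mul_succ_div_pow hb n i
  rw [Nat.div_eq_of_lt hi] at h
  omega

lemma finite_support_carrySeq_mod {b : ℕ} (hb : 2 ≤ b) (n : ℕ) :
    (support fun i => carrySeq b n i % b).Finite := by
  refine (Set.finite_lt_nat ((b + 1) * n)).subset fun i hi => ?_
  by_contra h
  refine hi ?_
  simp only [carrySeq_eq_zero_of_lt hb ((Nat.lt_pow_self (by omega)).trans_le
    (Nat.pow_le_pow_right (by omega) (not_lt.mp h))), Nat.zero_mod]

lemma ominus_mul_succ {b : ℕ} (hb : 2 ≤ b) (n : ℕ) :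
    ominus b ((b + 1) * n) n = ∑ᶠ i, carrySeq b n i % b * b ^ i := by
  refine finsum_congr fun i => ?_
  congr 1
  rw [bDigit_eq_div_pow_mod hb, bDigit_eq_div_pow_mod hb, mul_succ_div_pow hb]
  generalize n / b ^ i = f
  generalize carrySeq b n i = c
  push_cast
  rw [Int.sub_emod, Int.emod_emod_of_dvd _ dvd_rfl, Int.emod_emod_of_dvd _ dvd_rfl, ← Int.sub_emod,
    show ((b : ℤ) + 1) * f + c - f = c + b * f by ring,
    Int.add_mul_emod_self_left, ← Int.natCast_mod, Int.toNat_natCast]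

lemma flat_ominus_mul_succ {b : ℕ} (hb : 2 ≤ b) (n : ℕ) :
    flat b (ominus b ((b + 1) * n) n) = ∑ᶠ i, min (carrySeq b n i % b) 1 * b ^ i := by
  rw [flat, ominus_mul_succ hb]
  exact finsum_congr fun i => by
    rw [bDigit_finsum hb (fun i => Nat.mod_lt _ (by omega)) (finite_support_carrySeq_mod hb n)]

lemma negaStep_eq_neg_ediv (b m : ℤ) : negaStep b m = -(m / b) := by
  rw [negaStep, Int.emod_def, sub_sub_cancel, Int.ediv_neg]
  rcases eq_or_ne b 0 with rfl | hb
  · simp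
  · rw [Int.mul_ediv_cancel_left _ hb]

lemma negaStep_natCast (b F : ℕ) : negaStep b F = -((F / b : ℕ) : ℤ) := by
  rw [negaStep_eq_neg_ediv, Int.natCast_ediv]

lemma negaStep_neg_natCast {b : ℕ} (hb : 0 < b) (F : ℕ) :
    negaStep b (-F) = ((F + b - 1) / b : ℕ) := by
  rw [negaStep_eq_neg_ediv, neg_eq_iff_eq_neg]
  have hle := Nat.div_mul_le_self (F + b - 1) b
  have hlt := Nat.lt_div_mul_add (a := F + b - 1) hb
  generalize (F + b - 1) / b = q at hle hlt ⊢
  have hF : F ≤ q * b := by omega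
  refine ((Int.ediv_emod_unique (r := (q * b - F : ℕ)) (by omega)).mpr ⟨?_, by omega, ?_⟩).1
  · push_cast [Nat.cast_sub hF]
    ring
  · exact_mod_cast (by omega : q * b - F < b)

lemma negaStep_neg_carry {b q a c : ℕ} (ha : a < b) (hc : c ≤ b) :
    negaStep b (-((b * q + a + c / b : ℕ) : ℤ)) = ((q + min ((a + c) / b + a) 1 : ℕ) : ℤ) := by
  have hb : 0 < b := by omega
  rw [negaStep_neg_natCast hb, show b * q + a + c / b + b - 1 = a + c / b + b - 1 + b * q by
    generalize b * q = m; generalize c / b = e; omega, Nat.add_mul_div_left _ _ hb]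
  have h1 := div_eq_ite_of_lt_two_mul (x := c) (b := b) (by omega)
  have h2 := div_eq_ite_of_lt_two_mul (x := a + c) (b := b) (by omega)
  have h3 := div_eq_ite_of_lt_two_mul (x := a + c / b + b - 1) (b := b)
    (by rw [h1]; split_ifs <;> omega)
  rw [h3, h2, h1]
  split_ifs <;> omega

lemma negaStep_carry {b q a c : ℕ} (ha : a < b) (hc : c ≤ b) :
    negaStep b ((b * q + a + min c 1 : ℕ) : ℤ) = -((q + ((a + c) / b + a) / b : ℕ) : ℤ) := by
  have hb : 0 < b := by omega
  rw [negaStep_natCast, show b * q + a + min c 1 = a + min c 1 + b * q by ring,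
    Nat.add_mul_div_left _ _ hb]
  have h1 := div_eq_ite_of_lt_two_mul (x := a + c) (b := b) (by omega)
  have h2 := div_eq_ite_of_lt_two_mul (x := a + min c 1) (b := b) (by omega)
  have h3 := div_eq_ite_of_lt_two_mul (x := (a + c) / b + a) (b := b)
    (by rw [h1]; split_ifs <;> omega)
  rw [h3, h2, h1]
  split_ifs <;> omega

lemma negaStep_iterate {b : ℕ} (hb : 2 ≤ b) (n i : ℕ) :
    ((negaStep b)^[i] n = ((n / b ^ i + min (carrySeq b n i) 1 : ℕ) : ℤ) ∧
        (negaStep b)^[i] (-n) = -((n / b ^ i + carrySeq b n i / b : ℕ) : ℤ)) ∨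
      ((negaStep b)^[i] n = -((n / b ^ i + carrySeq b n i / b : ℕ) : ℤ) ∧
        (negaStep b)^[i] (-n) = ((n / b ^ i + min (carrySeq b n i) 1 : ℕ) : ℤ)) := by
  induction i with
  | zero => left; simp [carrySeq]
  | succ i ih =>
    have hA := negaStep_neg_carry (q := n / b ^ (i + 1)) (bDigit_lt hb n i) (carrySeq_le hb n i)
    have hB := negaStep_carry (q := n / b ^ (i + 1)) (bDigit_lt hb n i) (carrySeq_le hb n i)
    rw [div_pow_eq_mul_div_pow_succ_add_bDigit hb] at ih
    simp only [Function.iterate_succ_apply']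
    rcases ih with ⟨hx, hy⟩ | ⟨hx, hy⟩
    · right; rw [hx, hy, hA, hB]; exact ⟨rfl, rfl⟩
    · left; rw [hx, hy, hA, hB]; exact ⟨rfl, rfl⟩

lemma negaDigit_add_negaDigit_neg {b : ℕ} (hb : 2 ≤ b) (n i : ℕ) :
    (negaDigit b n i + negaDigit b (-n) i) % b = ((min (carrySeq b n i % b) 1 : ℕ) : ℤ) := by
  have hpair : ((n / b ^ i + min (carrySeq b n i) 1 : ℕ) : ℤ)
      - ((n / b ^ i + carrySeq b n i / b : ℕ) : ℤ) = ((min (carrySeq b n i % b) 1 : ℕ) : ℤ) := by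
    rcases (carrySeq_le hb n i).lt_or_eq with hc | hc
    · rw [Nat.div_eq_of_lt hc, Nat.mod_eq_of_lt hc]; push_cast; ring
    · rw [hc, Nat.div_self (by omega), Nat.mod_self]; push_cast; omega
  have hsum : (negaStep b)^[i] n + (negaStep b)^[i] (-n)
      = ((min (carrySeq b n i % b) 1 : ℕ) : ℤ) := by
    rcases negaStep_iterate hb n i with ⟨hx, hy⟩ | ⟨hx, hy⟩ <;> rw [hx, hy] <;> linarith
  rw [negaDigit, negaDigit, ← Int.add_emod, hsum, Int.emod_eq_of_lt (by positivity)
    (by exact_mod_cast (by omega : min (carrySeq b n i % b) 1 < b))]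

theorem stmt3_general (b n : ℕ) (hb : 2 ≤ b) :
    (flat b (ominus b ((b + 1) * n) n) : ℤ) = oplusNeg (b : ℤ) (n : ℤ) (-(n : ℤ)) := by
  have hfin : HasFiniteSupport fun i => min (carrySeq b n i % b) 1 * b ^ i :=
    (finite_support_carrySeq_mod hb n).subset fun i hi h0 => hi (by simp [h0])
  have hcast := map_finsum (Nat.castAddMonoidHom ℤ) hfin
  simp only [Nat.coe_castAddMonoidHom] at hcast
  rw [flat_ominus_mul_succ hb, oplusNeg, hcast]
  refine finsum_congr fun i => ?_
  rw [negaDigit_add_negaDigit_neg hb]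
  simp

theorem stmt3 (b n : ℕ) (hb : 2 ≤ b) (hn : 0 < n) :
    (flat b (ominus b ((b + 1) * n) n) : ℤ) = oplusNeg (b : ℤ) (n : ℤ) (-(n : ℤ)) :=
  stmt3_general b n hb
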